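/- Let X ⊆ ℕ with 0 ∈ X, and suppose X + {0,u} = X + {0,v} for some u, v ∈ ℕ with u ≠ v. Then nX = (n+1)X for all sufficiently large n. -/

import Mathlib

open Pointwise

/-- `nsum X n` is the `n`-fold sumset of `X ⊆ ℕ`, with `nsum X 0 = {0}`. -/
def nsum (X : Set ℕ) : ℕ → Set ℕ
  | 0 => {0}
  | n + 1 => nsum X n + X

lemma nsum_zero (X : Set ℕ) : nsum X 0 = {0} := rfl

lemma nsum_succ (X : Set ℕ) (n : ℕ) : nsum X (n + 1) = nsum X n + X := rfl

lemma nsum_add (X : Set ℕ) (a b : ℕ) : nsum X (a + b) = nsum X a + nsum X b := by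
  induction b with
  | zero =>
    ext m
    simp [nsum_zero, Set.add_singleton]
  | succ b ih =>
    rw [← Nat.add_assoc, nsum_succ, nsum_succ, ih, add_assoc]

lemma zero_mem_nsum (X : Set ℕ) (h0 : (0:ℕ) ∈ X) (n : ℕ) : (0:ℕ) ∈ nsum X n := by
  induction n with
  | zero => exact rfl
  | succ n ih => simpa [nsum_succ] using Set.add_mem_add ih h0

lemma mem_nsum_one (X : Set ℕ) {x : ℕ} (hx : x ∈ X) : x ∈ nsum X 1 := by
  have : (0:ℕ) + x ∈ nsum X 0 + X := Set.add_mem_add rfl hx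
  simpa [nsum_succ] using this

lemma nsum_mono (X : Set ℕ) (h0 : (0:ℕ) ∈ X) {a b : ℕ} (hab : a ≤ b) :
    nsum X a ⊆ nsum X b := by
  intro s hs
  have h : b = a + (b - a) := by omega
  rw [h, nsum_add]
  simpa using Set.add_mem_add hs (zero_mem_nsum X h0 (b - a))

lemma mem_nsum_self (X : Set ℕ) (h0 : (0:ℕ) ∈ X) :
    ∀ k m, m ∈ nsum X k → m ∈ nsum X m := by
  intro k
  induction k with
  | zero =>
    intro m hm
    rw [nsum_zero] at hm
    have hm0 : m = 0 := hm
    subst hm0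
    exact rfl
  | succ k ih =>
    intro m hm
    rw [nsum_succ, Set.mem_add] at hm
    obtain ⟨s, hs, x, hx, rfl⟩ := hm
    rcases Nat.eq_zero_or_pos x with rfl | hxpos
    · simpa using ih s hs
    · have hs' : s ∈ nsum X s := ih s hs
      have h1 : s ≤ s + x - 1 := by omega
      have hss : s ∈ nsum X (s + x - 1) := nsum_mono X h0 h1 hs'
      have h2 : (s + x - 1) + 1 = s + x := by omega
      have hmem : s + x ∈ nsum X ((s + x - 1) + 1) := by
        rw [nsum_succ]; exact Set.add_mem_add hss hx
      rwa [h2] at hmem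

lemma nsum_dvd (X : Set ℕ) {g : ℕ} (hg : ∀ x ∈ X, g ∣ x) :
    ∀ k m, m ∈ nsum X k → g ∣ m := by
  intro k
  induction k with
  | zero => intro m hm; rw [nsum_zero] at hm; simp_all
  | succ k ih =>
    intro m hm
    rw [nsum_succ, Set.mem_add] at hm
    obtain ⟨s, hs, x, hx, rfl⟩ := hm
    exact Nat.dvd_add (ih s hs) (hg x hx)

lemma mul_mem_nsum (X : Set ℕ) {P a : ℕ} (hP : P ∈ nsum X a) (r : ℕ) :
    r * P ∈ nsum X (r * a) := by
  induction r with
  | zero => simp [nsum_zero]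
  | succ r ih =>
    have : r * P + P ∈ nsum X (r * a) + nsum X a := Set.add_mem_add ih hP
    rw [← nsum_add] at this
    have h1 : (r + 1) * P = r * P + P := by ring
    have h2 : (r + 1) * a = r * a + a := by ring
    rw [h1, h2]
    exact this

/-- Chicken–McNugget style: large multiples of `g` are in some `nsum`. -/
lemma frob (X : Set ℕ) (g P Q a b : ℕ) (hg : 1 ≤ g) (hgQ : g ∣ Q) (hQ : 1 ≤ Q)
    (hP : P ∈ nsum X a) (hQm : Q ∈ nsum X b) (hPQ : P = Q + g) :
    ∀ m, g ∣ m → Q ^ 2 + Q ≤ m → ∃ k, m ∈ nsum X k := by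
  intro m hgm hm
  obtain ⟨q, rfl⟩ := hgQ
  obtain ⟨c, rfl⟩ := hgm
  have hq1 : 1 ≤ q := by
    rcases Nat.eq_zero_or_pos q with rfl | h
    · simp at hQ
    · exact h
  set r := c % q with hr
  set t := c / q with ht
  have hkey : r + q * t = c := Nat.mod_add_div c q
  have hrq : r < q := Nat.mod_lt _ hq1
  have hck : q ^ 2 + q ≤ c := by
    have h2 : g * (q ^ 2 + q) ≤ g * c := by nlinarith [hm, hg]
    exact Nat.le_of_mul_le_mul_left h2 (by omega)
  have htr : r ≤ t := by
    by_contra h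
    push_neg at h
    nlinarith
  obtain ⟨s, hs⟩ : ∃ s, t = s + r := ⟨t - r, by omega⟩
  have hval : g * c = r * P + s * (g * q) := by
    rw [hPQ, ← hkey, hs]; ring
  refine ⟨r * a + s * b, ?_⟩
  rw [hval, nsum_add]
  exact Set.add_mem_add (mul_mem_nsum X hP r) (mul_mem_nsum X hQm s)

lemma key (X : Set ℕ) (h0 : (0:ℕ) ∈ X) (u v : ℕ) (hlt : u < v)
    (heq : X + ({0, u} : Set ℕ) = X + ({0, v} : Set ℕ)) :
    ∃ N : ℕ, ∀ n ≥ N, nsum X n = nsum X (n + 1) := by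
  -- step property
  have star : ∀ x ∈ X, x + (v - u) ∈ X ∨ x + v ∈ X := by
    intro x hx
    have hxv : x + v ∈ X + ({0, v} : Set ℕ) :=
      Set.add_mem_add hx (by simp)
    rw [← heq, Set.mem_add] at hxv
    obtain ⟨y, hy, c, hc, hyc⟩ := hxv
    simp only [Set.mem_insert_iff, Set.mem_singleton_iff] at hc
    rcases hc with hc | hc
    · right
      have hyx : y = x + v := by omega
      rwa [← hyx]
    · left
      have hyx : y = x + (v - u) := by omega
      rwa [← hyx]
  -- window property
  have window : ∀ t : ℕ, ∃ x ∈ X, t ≤ x ∧ x < t + v := by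
    intro t
    induction t with
    | zero => exact ⟨0, h0, le_refl _, by omega⟩
    | succ t ih =>
      obtain ⟨x, hx, h1, h2⟩ := ih
      rcases eq_or_lt_of_le h1 with heqx | h
      · rcases star x hx with h' | h'
        · exact ⟨x + (v - u), h', by omega, by omega⟩
        · exact ⟨x + v, h', by omega, by omega⟩
      · exact ⟨x, hx, by omega, by omega⟩
  obtain ⟨x1, hx1, hx1a, _⟩ := window 1
  -- the gcd
  obtain ⟨g', hH⟩ := Int.subgroup_cyclic (AddSubgroup.closure ((↑) '' X : Set ℤ))
  set g := g'.natAbs with hgdef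
  have hdvd : ∀ x ∈ X, g ∣ x := by
    intro x hx
    have hmem : (x : ℤ) ∈ AddSubgroup.closure ((↑) '' X : Set ℤ) :=
      AddSubgroup.subset_closure ⟨x, hx, rfl⟩
    rw [hH, AddSubgroup.mem_closure_singleton] at hmem
    obtain ⟨n, hn⟩ := hmem
    have : g' ∣ (x : ℤ) := ⟨n, by rw [← hn, zsmul_eq_mul]; push_cast; ring⟩
    have := Int.natAbs_dvd_natAbs.mpr this
    simp at this
    exact this
  have hg'mem : g' ∈ AddSubgroup.closure ((↑) '' X : Set ℤ) := by
    rw [hH]; exact AddSubgroup.subset_closure rfl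
  -- representation of g' as difference of sumset elements
  have hrep : ∃ (P Q a b : ℕ), P ∈ nsum X a ∧ Q ∈ nsum X b ∧ (P : ℤ) - Q = g' := by
    refine AddSubgroup.closure_induction
      (p := fun z _ => ∃ (P Q a b : ℕ), P ∈ nsum X a ∧ Q ∈ nsum X b ∧ (P : ℤ) - Q = z)
      ?_ ?_ ?_ ?_ hg'mem
    · rintro z ⟨x, hx, rfl⟩
      exact ⟨x, 0, 1, 0, mem_nsum_one X hx, rfl, by simp⟩
    · exact ⟨0, 0, 0, 0, rfl, rfl, by simp⟩
    · rintro z w _ _ ⟨P1, Q1, a1, b1, hP1, hQ1, h1⟩ ⟨P2, Q2, a2, b2, hP2, hQ2, h2⟩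
      refine ⟨P1 + P2, Q1 + Q2, a1 + a2, b1 + b2, ?_, ?_, ?_⟩
      · rw [nsum_add]; exact Set.add_mem_add hP1 hP2
      · rw [nsum_add]; exact Set.add_mem_add hQ1 hQ2
      · push_cast; omega
    · rintro z _ ⟨P1, Q1, a1, b1, hP1, hQ1, h1⟩
      exact ⟨Q1, P1, b1, a1, hQ1, hP1, by omega⟩
  obtain ⟨P0, Q0, a0, b0, hP0, hQ0, hPQ0⟩ := hrep
  have hg1 : 1 ≤ g := by
    rcases Nat.eq_zero_or_pos g with hz | h
    · exfalso
      have := hdvd x1 hx1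
      rw [hz] at this
      omega
    · exact h
  obtain ⟨P, Q, a, b, hP, hQ, hPQ⟩ :
      ∃ (P Q a b : ℕ), P ∈ nsum X a ∧ Q ∈ nsum X b ∧ P = Q + g := by
    have : P0 = Q0 + g ∨ Q0 = P0 + g := by omega
    rcases this with h | h
    · exact ⟨P0, Q0, a0, b0, hP0, hQ0, h⟩
    · exact ⟨Q0, P0, b0, a0, hQ0, hP0, h⟩
  -- make the smaller one positive
  obtain ⟨Q₁, hQ₁def⟩ : ∃ t, t = Q + P := ⟨_, rfl⟩
  obtain ⟨P₁, hP₁def⟩ : ∃ t, t = P + P := ⟨_, rfl⟩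
  have hP₁mem : P₁ ∈ nsum X (a + a) := by
    rw [hP₁def, nsum_add]; exact Set.add_mem_add hP hP
  have hQ₁mem : Q₁ ∈ nsum X (b + a) := by
    rw [hQ₁def, nsum_add]; exact Set.add_mem_add hQ hP
  have hQ₁pos : 1 ≤ Q₁ := by omega
  have hgQ₁ : g ∣ Q₁ := by
    rw [hQ₁def]
    exact Nat.dvd_add (nsum_dvd X hdvd b Q hQ) (nsum_dvd X hdvd a P hP)
  have hPQ₁ : P₁ = Q₁ + g := by omega
  obtain ⟨B, hBdef⟩ : ∃ t, t = Q₁ ^ 2 + Q₁ := ⟨_, rfl⟩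
  obtain ⟨N, hNdef⟩ : ∃ t, t = B + v + 1 := ⟨_, rfl⟩
  -- absorption at N
  have habs : nsum X (N + 1) ⊆ nsum X N := by
    intro m hm
    by_cases hmN : m ≤ N
    · exact nsum_mono X h0 hmN (mem_nsum_self X h0 (N + 1) m hm)
    · push_neg at hmN
      obtain ⟨y, hy, hy1, hy2⟩ := window (m - B - v)
      have hym : y ≤ m := by omega
      have hgy : g ∣ y := hdvd y hy
      have hgm : g ∣ m := nsum_dvd X hdvd (N + 1) m hm
      have hgmy : g ∣ (m - y) := Nat.dvd_sub hgm hgy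
      have h1 : B ≤ m - y := by omega
      obtain ⟨k, hk⟩ := frob X g P₁ Q₁ (a + a) (b + a) hg1 hgQ₁ hQ₁pos
        hP₁mem hQ₁mem hPQ₁ (m - y) hgmy (by omega)
      have h2 : m - y ∈ nsum X (m - y) := mem_nsum_self X h0 k (m - y) hk
      have h3 : m - y ≤ B + v := by omega
      have h4 : m - y ∈ nsum X (B + v) := nsum_mono X h0 h3 h2
      have h5 : (m - y) + y ∈ nsum X (B + v) + X := Set.add_mem_add h4 hy
      have h6 : (m - y) + y = m := by omega
      rw [hNdef, nsum_succ]
      rw [← h6]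
      exact h5
  refine ⟨N, fun n hn => ?_⟩
  apply Set.Subset.antisymm (nsum_mono X h0 (by omega))
  calc nsum X (n + 1) = nsum X (N + 1) + nsum X (n - N) := by
        rw [← nsum_add, show n + 1 = N + 1 + (n - N) from by omega]
    _ ⊆ nsum X N + nsum X (n - N) := Set.add_subset_add habs (subset_refl _)
    _ = nsum X n := by
        rw [← nsum_add, show N + (n - N) = n from by omega]

theorem stmt_13 (X : Set ℕ) (h0 : (0 : ℕ) ∈ X) (u v : ℕ) (huv : u ≠ v)
    (heq : X + ({0, u} : Set ℕ) = X + ({0, v} : Set ℕ)) :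
    ∃ N : ℕ, ∀ n ≥ N, nsum X n = nsum X (n + 1) := by
  rcases huv.lt_or_gt with h | h
  · exact key X h0 u v h heq
  · exact key X h0 v u h heq.symm
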